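/- Let n ≥ 1 and 1 ≤ ω ≤ ϖ be integers, let m ∈ M_ω with m ≠ 0, and let c ∈ ℝⁿ with |c_j| ≤ 1 for all j; set s = m ∘ c (componentwise product). Let n_s divide n with n_s ≥ 2ϖ−1, fix r_0 ∈ {0,…,n−1}, and set r_i = (r_0 + i·(n/n_s)) mod n for i = 0,…,n_s−1. Let m̂ ∈ S_{≥|s|} ∩ S_ϖ satisfy ‖m̂‖₂ ≤ ‖x‖₂ for every x ∈ S_{≥|s|} ∩ S_ϖ. Then ‖m − m̂‖₂ / ‖m‖₂ ≤ sqrt(1 − (Σ_{i=0}^{n_s−1} s_{r_i}²)/(Σ_{i=0}^{n_s−1} m_{r_i}²)). -/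

import Mathlib

open scoped BigOperators

noncomputable section

/-- Low-frequency index set `K_ω ⊆ {0,…,n−1}`. -/
def Kset (n ω : ℕ) : Set (Fin n) := {k | (k : ℕ) ≤ ω - 1 ∨ n - ω + 1 ≤ (k : ℕ)}

/-- The set of ω-bandlimited real vectors `S_ω`. -/
def Sband (n ω : ℕ) : Set (EuclideanSpace ℝ (Fin n)) :=
  {x | ∀ k : Fin n, k ∉ Kset n ω →
    ∑ j : Fin n, (x j : ℂ) *
      Complex.exp (-(2 * (Real.pi : ℂ) * Complex.I * ((j : ℕ) : ℂ) * ((k : ℕ) : ℂ)) / (n : ℂ)) = 0}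

/-- The set of nonnegative ω-bandlimited vectors `M_ω`. -/
def Mmod (n ω : ℕ) : Set (EuclideanSpace ℝ (Fin n)) :=
  {x ∈ Sband n ω | ∀ j, 0 ≤ x j}

/-- The constraint set `S_{≥|s|}`. -/
def Sgeq (n : ℕ) (s : EuclideanSpace ℝ (Fin n)) : Set (EuclideanSpace ℝ (Fin n)) :=
  {x | ∀ j, |s j| ≤ x j}

/-!
The estimate `m̂` is the metric projection of `0` onto the convex set `S_{≥|s|} ∩ S_ϖ`, which
contains `m`; hence `⟪m̂, m - m̂⟫ ≥ 0`, i.e. `‖m - m̂‖² ≤ ‖m‖² - ⟪m, m̂⟫`. The pointwise product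
of two `ϖ`-bandlimited vectors only has frequencies congruent to integers of absolute value
`≤ 2ϖ - 2 < n_s`, and such frequencies are not aliased by `n_s` equally spaced samples, so
`n · ∑ᵢ x(rᵢ) y(rᵢ) = n_s · ⟪x, y⟫`. Applied to `(m, m)` and `(m, m̂)`, together with
`s² ≤ m m̂` on the samples, this gives `⟪m, m̂⟫ ≥ ‖m‖² · ∑ᵢ s(rᵢ)² / ∑ᵢ m(rᵢ)²`.
-/

open scoped InnerProductSpace

theorem inner_sub_nonneg_of_forall_norm_le {F : Type*} [NormedAddCommGroup F]
    [InnerProductSpace ℝ F] {K : Set F} (hK : Convex ℝ K) {v : F} (hv : v ∈ K)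
    (hmin : ∀ w ∈ K, ‖v‖ ≤ ‖w‖) {w : F} (hw : w ∈ K) : 0 ≤ ⟪v, w - v⟫_ℝ := by
  have : Nonempty K := ⟨⟨v, hv⟩⟩
  have hinf : ‖0 - v‖ = ⨅ u : K, ‖0 - (u : F)‖ := by
    simp only [zero_sub, norm_neg]
    exact le_antisymm (le_ciInf fun u => hmin u u.2)
      (ciInf_le (f := fun u : K => ‖(u : F)‖)
        ⟨0, by rintro _ ⟨u, rfl⟩; exact norm_nonneg _⟩ ⟨v, hv⟩)
  have := (norm_eq_iInf_iff_real_inner_le_zero hK hv).mp hinf w hw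
  rw [zero_sub, inner_neg_left] at this
  linarith

theorem norm_sub_div_norm_le_sqrt {F : Type*} [NormedAddCommGroup F] [InnerProductSpace ℝ F]
    {m v : F} {ρ : ℝ} (hv : 0 ≤ ⟪v, m - v⟫_ℝ) (hρ : ρ * ‖m‖ ^ 2 ≤ ⟪m, v⟫_ℝ) :
    ‖m - v‖ / ‖m‖ ≤ √(1 - ρ) := by
  have herr : ‖m - v‖ ^ 2 ≤ (1 - ρ) * ‖m‖ ^ 2 := by
    rw [norm_sub_sq_real, ← real_inner_self_eq_norm_sq v]
    rw [inner_sub_right, real_inner_comm] at hv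
    linarith
  refine div_le_of_le_mul₀ (norm_nonneg _) (Real.sqrt_nonneg _) ?_
  rw [← Real.sqrt_sq (norm_nonneg m), ← Real.sqrt_mul' _ (sq_nonneg _)]
  exact Real.le_sqrt_of_sq_le herr

theorem exists_modEq_natAbs_le_of_mem_Kset {n ϖ : ℕ} {k : Fin n} (hk : k ∈ Kset n ϖ) :
    ∃ a : ℤ, a ≡ k [ZMOD n] ∧ a.natAbs ≤ ϖ - 1 := by
  rcases hk with hk | hk
  · exact ⟨k, rfl, by omega⟩
  · refine ⟨k - n, ?_, by omega⟩
    simp [Int.ModEq]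

theorem Kset_mono {n ω ϖ : ℕ} (h : ω ≤ ϖ) : Kset n ω ⊆ Kset n ϖ := by
  intro k hk
  simp only [Kset, Set.mem_ofPred_eq] at hk ⊢
  omega

section DFT

variable {K : Type*} [Field K] {n : ℕ} {ζ : K}

theorem IsPrimitiveRoot.sum_zpow_mul_eq_ite (hζ : IsPrimitiveRoot ζ n) (e : ℤ) :
    ∑ j : Fin n, ζ ^ ((j : ℤ) * e) = if (n : ℤ) ∣ e then (n : K) else 0 := by
  have hpow : ∀ j : Fin n, ζ ^ ((j : ℤ) * e) = (ζ ^ e) ^ (j : ℕ) := fun j => by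
    rw [mul_comm, zpow_mul, zpow_natCast]
  rw [Finset.sum_congr rfl fun j _ => hpow j, Fin.sum_univ_eq_sum_range (fun j => (ζ ^ e) ^ j)]
  split_ifs with h
  · simp [(hζ.zpow_eq_one_iff_dvd e).mpr h]
  · have hne : ζ ^ e - 1 ≠ 0 := sub_ne_zero.mpr fun h1 => h ((hζ.zpow_eq_one_iff_dvd e).mp h1)
    have hn : (ζ ^ e) ^ n = 1 := by
      rw [← zpow_natCast, ← zpow_mul, mul_comm, zpow_mul, zpow_natCast, hζ.pow_eq_one, one_zpow]
    rw [geom_sum_eq (sub_ne_zero.mp hne), hn, sub_self, zero_div]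

theorem Fin.dvd_sub_iff_eq (p j : Fin n) : (n : ℤ) ∣ (p : ℤ) - j ↔ p = j :=
  ⟨fun h => Fin.ext ((Nat.modEq_iff_dvd.mpr h).eq_of_lt_of_lt j.isLt p.isLt).symm,
    fun h => by simp [h]⟩

def dft (ζ : K) (x : Fin n → K) (k : Fin n) : K :=
  ∑ j : Fin n, x j * ζ ^ (-((j : ℤ) * k))

theorem IsPrimitiveRoot.sum_dft_mul_zpow (hζ : IsPrimitiveRoot ζ n) (x : Fin n → K)
    (p : Fin n) :
    ∑ k, dft ζ x k * ζ ^ ((p : ℤ) * k) = n * x p := by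
  have hζ0 : ζ ≠ 0 := hζ.ne_zero p.pos.ne'
  simp only [dft, Finset.sum_mul]
  rw [Finset.sum_comm]
  have h : ∀ j : Fin n, ∑ k : Fin n, x j * ζ ^ (-((j : ℤ) * k)) * ζ ^ ((p : ℤ) * k)
      = x j * ∑ k : Fin n, ζ ^ ((k : ℤ) * (p - j)) := fun j => by
    rw [Finset.mul_sum]
    refine Finset.sum_congr rfl fun k _ => ?_
    rw [mul_assoc, ← zpow_add₀ hζ0]
    ring_nf
  simp only [h, hζ.sum_zpow_mul_eq_ite, Fin.dvd_sub_iff_eq, mul_ite, mul_zero, Finset.sum_ite_eq,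
    Finset.mem_univ, if_true]
  ring

theorem IsPrimitiveRoot.natCast_sq_mul_sum_mul_eq_sum_dft (hζ : IsPrimitiveRoot ζ n)
    {ι : Type*} [Fintype ι] (p : ι → Fin n) (x y : Fin n → K) :
    (n : K) ^ 2 * ∑ i, x (p i) * y (p i) =
      ∑ k, ∑ l, dft ζ x k * dft ζ y l * ∑ i, ζ ^ ((p i : ℤ) * (k + l)) := by
  have hζ0 (i : ι) : ζ ≠ 0 := hζ.ne_zero (p i).pos.ne'
  have h (i : ι) : (n : K) ^ 2 * (x (p i) * y (p i)) =
      ∑ k, ∑ l, dft ζ x k * dft ζ y l * ζ ^ ((p i : ℤ) * (k + l)) := by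
    rw [show (n : K) ^ 2 * (x (p i) * y (p i)) = (n * x (p i)) * (n * y (p i)) by ring,
      ← hζ.sum_dft_mul_zpow, ← hζ.sum_dft_mul_zpow, Finset.sum_mul_sum]
    refine Finset.sum_congr rfl fun k _ => Finset.sum_congr rfl fun l _ => ?_
    rw [mul_add, zpow_add₀ (hζ0 i)]
    ring
  simp only [Finset.mul_sum, h]
  rw [Finset.sum_comm]
  exact Finset.sum_congr rfl fun k _ => Finset.sum_comm

variable {ns : ℕ}

theorem IsPrimitiveRoot.sum_zpow_sample_mul_eq_ite (hζ : IsPrimitiveRoot ζ n) (hn : n ≠ 0)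
    (hdvd : ns ∣ n) (r0 : ℕ) (r : Fin ns → Fin n)
    (hr : ∀ i : Fin ns, (r i : ℕ) = (r0 + (i : ℕ) * (n / ns)) % n) (e : ℤ) :
    ∑ i, ζ ^ ((r i : ℤ) * e) = ζ ^ ((r0 : ℤ) * e) * if (ns : ℤ) ∣ e then (ns : K) else 0 := by
  have hζd : IsPrimitiveRoot (ζ ^ (n / ns)) ns :=
    hζ.pow (Nat.pos_of_ne_zero hn) (Nat.div_mul_cancel hdvd).symm
  have h (i : Fin ns) :
      ζ ^ ((r i : ℤ) * e) = ζ ^ ((r0 : ℤ) * e) * (ζ ^ (n / ns)) ^ ((i : ℤ) * e) := by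
    have hri : ζ ^ (r i : ℕ) = ζ ^ r0 * (ζ ^ (n / ns)) ^ (i : ℕ) := by
      rw [hr, hζ.eq_orderOf, pow_mod_orderOf, pow_add, ← pow_mul, mul_comm (i : ℕ)]
    rw [zpow_mul, zpow_natCast, hri, mul_zpow, zpow_mul, zpow_natCast, zpow_mul (ζ ^ (n / ns)),
      zpow_natCast]
  rw [Finset.sum_congr rfl fun i _ => h i, ← Finset.mul_sum, hζd.sum_zpow_mul_eq_ite]

theorem IsPrimitiveRoot.natCast_mul_sum_zpow_sample (hζ : IsPrimitiveRoot ζ n) (hn : n ≠ 0)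
    (hdvd : ns ∣ n) (r0 : ℕ) (r : Fin ns → Fin n)
    (hr : ∀ i : Fin ns, (r i : ℕ) = (r0 + (i : ℕ) * (n / ns)) % n) {e a : ℤ}
    (hae : a ≡ e [ZMOD n]) (ha : a.natAbs < ns) :
    n * ∑ i, ζ ^ ((r i : ℤ) * e) = ns * ∑ j : Fin n, ζ ^ ((j : ℤ) * e) := by
  have hdvd_iff : (ns : ℤ) ∣ e ↔ (n : ℤ) ∣ e := by
    refine ⟨fun h => ?_, (Int.natCast_dvd_natCast.mpr hdvd).trans⟩
    have hna : (ns : ℤ) ∣ a := by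
      simpa using (dvd_sub h ((Int.natCast_dvd_natCast.mpr hdvd).trans hae.dvd))
    have : a = 0 := Int.eq_zero_of_dvd_of_natAbs_lt_natAbs hna (by simpa using ha)
    simpa [this] using hae.dvd
  rw [hζ.sum_zpow_sample_mul_eq_ite hn hdvd r0 r hr, hζ.sum_zpow_mul_eq_ite]
  simp only [hdvd_iff]
  split_ifs with h
  · rw [(hζ.zpow_eq_one_iff_dvd _).mpr (h.mul_left _)]
    ring
  · simp

theorem IsPrimitiveRoot.natCast_mul_sum_sample_mul_eq (hζ : IsPrimitiveRoot ζ n) (hn : n ≠ 0)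
    {ϖ : ℕ} (hdvd : ns ∣ n) (hns : 2 * ϖ - 1 ≤ ns) (r0 : ℕ) (r : Fin ns → Fin n)
    (hr : ∀ i : Fin ns, (r i : ℕ) = (r0 + (i : ℕ) * (n / ns)) % n) {x y : Fin n → K}
    (hx : ∀ k ∉ Kset n ϖ, dft ζ x k = 0) (hy : ∀ k ∉ Kset n ϖ, dft ζ y k = 0) :
    n * ∑ i, x (r i) * y (r i) = ns * ∑ j, x j * y j := by
  have hns_pos : 0 < ns := Nat.pos_of_dvd_of_pos hdvd (Nat.pos_of_ne_zero hn)
  have hterm (k l : Fin n) : n * (dft ζ x k * dft ζ y l * ∑ i, ζ ^ ((r i : ℤ) * (k + l))) =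
      ns * (dft ζ x k * dft ζ y l * ∑ j : Fin n, ζ ^ ((j : ℤ) * (k + l))) := by
    by_cases hk : k ∈ Kset n ϖ
    · by_cases hl : l ∈ Kset n ϖ
      · obtain ⟨a, hak, ha⟩ := exists_modEq_natAbs_le_of_mem_Kset hk
        obtain ⟨b, hbl, hb⟩ := exists_modEq_natAbs_le_of_mem_Kset hl
        -- `k + l` is congruent to `a + b` with `|a + b| ≤ 2ϖ - 2 < ns`: no aliasing
        rw [mul_left_comm,
          hζ.natCast_mul_sum_zpow_sample hn hdvd r0 r hr (hak.add hbl) (by omega)]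
        ring
      · simp [hy l hl]
    · simp [hx k hk]
  have : NeZero n := ⟨hn⟩
  refine mul_left_cancel₀ (pow_ne_zero 2 hζ.neZero'.out) ?_
  calc (n : K) ^ 2 * (n * ∑ i, x (r i) * y (r i))
      = n * ∑ k, ∑ l, dft ζ x k * dft ζ y l * ∑ i, ζ ^ ((r i : ℤ) * (k + l)) := by
        rw [← hζ.natCast_sq_mul_sum_mul_eq_sum_dft]
        ring
    _ = ns * ∑ k, ∑ l, dft ζ x k * dft ζ y l * ∑ j : Fin n, ζ ^ ((j : ℤ) * (k + l)) := by
        simp only [Finset.mul_sum _ _ (n : K), Finset.mul_sum _ _ (ns : K), hterm]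
    _ = (n : K) ^ 2 * (ns * ∑ j, x j * y j) := by
        rw [← hζ.natCast_sq_mul_sum_mul_eq_sum_dft (fun j => j)]
        ring

end DFT

theorem dft_eq_zero_of_mem_Sband {n ω : ℕ} {x : EuclideanSpace ℝ (Fin n)} (hx : x ∈ Sband n ω)
    {k : Fin n} (hk : k ∉ Kset n ω) :
    dft (Complex.exp (2 * Real.pi * Complex.I / n)) (fun j => (x j : ℂ)) k = 0 := by
  rw [← hx k hk, dft]
  refine Finset.sum_congr rfl fun j _ => ?_
  rw [← Complex.exp_int_mul]
  push_cast
  ring_nf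

theorem Sband_mono {n ω ϖ : ℕ} (h : ω ≤ ϖ) : Sband n ω ⊆ Sband n ϖ :=
  fun _ hx k hk => hx k fun hk' => hk (Kset_mono h hk')

theorem convex_Sband (n ω : ℕ) : Convex ℝ (Sband n ω) := by
  intro x hx y hy a b _ _ _ k hk
  have hxk := hx k hk
  have hyk := hy k hk
  simp only [mul_assoc] at hxk hyk
  simp only [PiLp.add_apply, PiLp.smul_apply, smul_eq_mul, Complex.ofReal_add,
    Complex.ofReal_mul, add_mul, Finset.sum_add_distrib, mul_assoc, ← Finset.mul_sum, hxk, hyk,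
    mul_zero, add_zero]

theorem convex_Sgeq (n : ℕ) (s : EuclideanSpace ℝ (Fin n)) : Convex ℝ (Sgeq n s) := by
  intro x hx y hy a b ha hb hab j
  calc |s j| = a * |s j| + b * |s j| := by rw [← add_mul, hab, one_mul]
    _ ≤ (a • x + b • y) j :=
      add_le_add (mul_le_mul_of_nonneg_left (hx j) ha) (mul_le_mul_of_nonneg_left (hy j) hb)

theorem natCast_mul_sum_sample_mul_eq_inner {n ϖ ns : ℕ} (hn : 1 ≤ n) (hdvd : ns ∣ n)
    (hns : 2 * ϖ - 1 ≤ ns) (r0 : ℕ) (r : Fin ns → Fin n)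
    (hr : ∀ i : Fin ns, (r i : ℕ) = (r0 + (i : ℕ) * (n / ns)) % n)
    {x y : EuclideanSpace ℝ (Fin n)} (hx : x ∈ Sband n ϖ) (hy : y ∈ Sband n ϖ) :
    n * ∑ i, x (r i) * y (r i) = ns * ⟪x, y⟫_ℝ := by
  have h := (Complex.isPrimitiveRoot_exp n (by omega)).natCast_mul_sum_sample_mul_eq (by omega)
    hdvd hns r0 r hr (fun k hk => dft_eq_zero_of_mem_Sband hx hk)
    (fun k hk => dft_eq_zero_of_mem_Sband hy hk)
  rw [EuclideanSpace.inner_eq_star_dotProduct]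
  simp only [dotProduct, star_trivial, mul_comm (y _)]
  exact_mod_cast h

theorem modulator_recovery_error_bound_general
    (n ω ϖ ns : ℕ) (hn : 1 ≤ n) (hωϖ : ω ≤ ϖ)
    (m : EuclideanSpace ℝ (Fin n)) (hm : m ∈ Mmod n ω)
    (c : EuclideanSpace ℝ (Fin n)) (hc : ∀ j, |c j| ≤ 1)
    (s : EuclideanSpace ℝ (Fin n)) (hs : ∀ j, s j = m j * c j)
    (hdvd : ns ∣ n) (hns : 2 * ϖ - 1 ≤ ns)
    (r0 : ℕ) (r : Fin ns → Fin n)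
    (hr : ∀ i : Fin ns, (r i : ℕ) = (r0 + (i : ℕ) * (n / ns)) % n)
    (mhat : EuclideanSpace ℝ (Fin n))
    (hmhat : mhat ∈ Sgeq n s ∩ Sband n ϖ)
    (hmin : ∀ x ∈ Sgeq n s ∩ Sband n ϖ, ‖mhat‖ ≤ ‖x‖) :
    ‖m - mhat‖ / ‖m‖ ≤
      Real.sqrt (1 - (∑ i : Fin ns, (s (r i)) ^ 2) / (∑ i : Fin ns, (m (r i)) ^ 2)) := by
  have hmϖ : m ∈ Sband n ϖ := Sband_mono hωϖ hm.1
  have hsm (j : Fin n) : |s j| ≤ m j := by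
    rw [hs, abs_mul, abs_of_nonneg (hm.2 j)]
    exact mul_le_of_le_one_right (hm.2 j) (hc j)
  have hproj : 0 ≤ ⟪mhat, m - mhat⟫_ℝ := inner_sub_nonneg_of_forall_norm_le
    ((convex_Sgeq n s).inter (convex_Sband n ϖ)) hmhat hmin ⟨hsm, hmϖ⟩
  set A := ∑ i, m (r i) ^ 2
  set B := ∑ i, s (r i) ^ 2
  have hA : n * A = ns * ‖m‖ ^ 2 := by
    simpa only [A, sq, real_inner_self_eq_norm_sq] using
      natCast_mul_sum_sample_mul_eq_inner hn hdvd hns r0 r hr hmϖ hmϖ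
  have hC := natCast_mul_sum_sample_mul_eq_inner hn hdvd hns r0 r hr hmϖ hmhat.2
  have hBA : B ≤ A := Finset.sum_le_sum fun i _ =>
    sq_abs (s (r i)) ▸ pow_le_pow_left₀ (abs_nonneg _) (hsm _) 2
  have hBC : B ≤ ∑ i, m (r i) * mhat (r i) := Finset.sum_le_sum fun i _ =>
    sq_abs (s (r i)) ▸ sq (|s (r i)|) ▸ mul_le_mul (hsm _) (hmhat.1 _) (abs_nonneg _) (hm.2 _)
  have hρ : B / A * A = B := div_mul_cancel_of_imp fun h =>
    le_antisymm (h ▸ hBA) (Finset.sum_nonneg fun i _ => sq_nonneg _)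
  have hns0 : (0 : ℝ) < ns := by exact_mod_cast Nat.pos_of_dvd_of_pos hdvd hn
  have hρm : B / A * ‖m‖ ^ 2 ≤ ⟪m, mhat⟫_ℝ := by
    refine le_of_mul_le_mul_left ?_ hns0
    calc (ns : ℝ) * (B / A * ‖m‖ ^ 2) = n * (B / A * A) := by rw [mul_left_comm, ← hA]; ring
      _ = n * B := by rw [hρ]
      _ ≤ n * ∑ i, m (r i) * mhat (r i) := by gcongr
      _ = ns * ⟪m, mhat⟫_ℝ := hC
  exact norm_sub_div_norm_le_sqrt hproj hρm

/-- error bound for the minimal-norm modulator estimate in terms of the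
equally spaced samples of the signal and of the true modulator. -/
theorem modulator_recovery_error_bound
    (n ω ϖ ns : ℕ) (hn : 1 ≤ n) (hω : 1 ≤ ω) (hωϖ : ω ≤ ϖ)
    (m : EuclideanSpace ℝ (Fin n)) (hm : m ∈ Mmod n ω) (hmne : m ≠ 0)
    (c : EuclideanSpace ℝ (Fin n)) (hc : ∀ j, |c j| ≤ 1)
    (s : EuclideanSpace ℝ (Fin n)) (hs : ∀ j, s j = m j * c j)
    (hdvd : ns ∣ n) (hns : 2 * ϖ - 1 ≤ ns)
    (r0 : ℕ) (hr0 : r0 < n) (r : Fin ns → Fin n)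
    (hr : ∀ i : Fin ns, (r i : ℕ) = (r0 + (i : ℕ) * (n / ns)) % n)
    (mhat : EuclideanSpace ℝ (Fin n))
    (hmhat : mhat ∈ Sgeq n s ∩ Sband n ϖ)
    (hmin : ∀ x ∈ Sgeq n s ∩ Sband n ϖ, ‖mhat‖ ≤ ‖x‖) :
    ‖m - mhat‖ / ‖m‖ ≤
      Real.sqrt (1 - (∑ i : Fin ns, (s (r i)) ^ 2) / (∑ i : Fin ns, (m (r i)) ^ 2)) :=
  modulator_recovery_error_bound_general n ω ϖ ns hn hωϖ m hm c hc s hs hdvd hns r0 r hr mhat hmhat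
    hmin
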